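/- Lemma 3, part (ii): Let N, K, F be positive integers, M ≥ 0 a real, W_1,…,W_N i.i.d. uniform on {1,…,2^F}, and V_k = g_k(W_1,…,W_N) for k ∈ {1,…,K} where each g_k maps into a set of size at most ⌊2^{F·M}⌋. Fix ℓ ∈ {1,…,min(K,N)} and for k ∈ {1,…,ℓ} define α_k := (1/(F·binom(N,ℓ)·ℓ!))·∑_{d ∈ Q_ℓ^dist} I(W_{d_k}; V_1,…,V_k | W_{d_1},…,W_{d_{k−1}}), where Q_ℓ^dist is the set of ordered ℓ-tuples (d_1,…,d_ℓ) of pairwise distinct elements of {1,…,N}. Then ∑_{k=1}^{ℓ} α_k ≤ ℓ²·M/N. -/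

import Mathlib

/-- Probability that the discrete random variable `X` (on finite space `Ω` with
probability mass function `p`) takes the value `x`. -/
noncomputable def pr {Ω : Type*} [Fintype Ω] {α : Type*} [DecidableEq α]
    (p : Ω → ℝ) (X : Ω → α) (x : α) : ℝ :=
  ∑ ω ∈ Finset.univ.filter (fun ω => X ω = x), p ω

/-- Shannon entropy (base 2) of the discrete random variable `X`. -/
noncomputable def ent {Ω : Type*} [Fintype Ω] {α : Type*} [DecidableEq α]
    (p : Ω → ℝ) (X : Ω → α) : ℝ :=
  -∑ x ∈ Finset.univ.image X, pr p X x * Real.logb 2 (pr p X x)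

/-- Conditional mutual information `I(X;Y|Z) = H(X,Z) + H(Y,Z) − H(X,Y,Z) − H(Z)`
(base 2). -/
noncomputable def cmi {Ω : Type*} [Fintype Ω] {α β γ : Type*}
    [DecidableEq α] [DecidableEq β] [DecidableEq γ]
    (p : Ω → ℝ) (X : Ω → α) (Y : Ω → β) (Z : Ω → γ) : ℝ :=
  ent p (fun ω => (X ω, Z ω)) + ent p (fun ω => (Y ω, Z ω))
    - ent p (fun ω => (X ω, Y ω, Z ω)) - ent p Z

/-!
Fix an injective tuple `d` and let `Y = (V_1, …, V_ℓ)`. Replacing `V_1, …, V_k` by `Y` can only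
increase each term, and by the chain rule the `k`-sum becomes `I(W_d; Y) ≤ ℓF - H(W_d | Y)`.
Revealing the coordinates of `W_d` in increasing order and conditioning each one on all earlier
messages gives the Han-type bound `H(W_d | Y) ≥ ∑_{i ∈ d} H(W_i | Y, W_{<i})`. Each index lies in
the range of the same fraction `ℓ/N` of the injective tuples, so on average over `d` this is at
least `(ℓ/N) H(W | Y) = (ℓ/N) (NF - H(Y)) ≥ (ℓ/N) (NF - ℓFM)`, and the average of the `k`-sums is
at most `ℓ²FM/N`.
-/

open Finset Function Real

section Entropy

variable {Ω α β γ : Type*} [Fintype Ω] [DecidableEq α] [DecidableEq β] [DecidableEq γ]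
  {p : Ω → ℝ}

lemma sum_mul_logb_nonpos (hp : ∀ ω, 0 ≤ p ω) {u : Ω → ℝ} (hu : ∀ ω, 0 < p ω → 0 < u ω)
    (hsum : ∑ ω, p ω * u ω ≤ ∑ ω, p ω) : ∑ ω, p ω * logb 2 (u ω) ≤ 0 := by
  have hlog : ∀ ω, p ω * log (u ω) ≤ p ω * u ω - p ω := fun ω => by
    rcases (hp ω).eq_or_lt with h | h
    · simp [← h]
    · nlinarith [log_le_sub_one_of_pos (hu ω h)]
  have : ∑ ω, p ω * log (u ω) ≤ 0 :=
    (sum_le_sum fun ω _ => hlog ω).trans (by rw [sum_sub_distrib]; linarith)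
  simp only [logb, mul_div_assoc', ← sum_div]
  exact div_nonpos_of_nonpos_of_nonneg this (log_nonneg one_le_two)

lemma sum_pr_mul (p : Ω → ℝ) (X : Ω → α) (ψ : α → ℝ) :
    ∑ x ∈ univ.image X, pr p X x * ψ x = ∑ ω, p ω * ψ (X ω) := by
  simp only [pr, sum_mul]
  rw [← sum_fiberwise_of_maps_to (g := X) fun ω _ => mem_image_of_mem X (mem_univ ω)]
  exact sum_congr rfl fun x _ => sum_congr rfl fun ω hω => by rw [(mem_filter.1 hω).2]

lemma sum_pr (p : Ω → ℝ) (X : Ω → α) : ∑ x ∈ univ.image X, pr p X x = ∑ ω, p ω := by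
  simpa using sum_pr_mul p X fun _ => 1

lemma sum_pr_prod_left (p : Ω → ℝ) (X : Ω → α) (Z : Ω → γ) (z : γ) :
    ∑ x ∈ univ.image X, pr p (fun ω => (X ω, Z ω)) (x, z) = pr p Z z := by
  simp only [pr]
  rw [← sum_fiberwise_of_maps_to (s := univ.filter fun ω => Z ω = z) (g := X)
    fun ω _ => mem_image_of_mem X (mem_univ ω)]
  refine sum_congr rfl fun x _ => sum_congr ?_ fun _ _ => rfl
  ext ω
  simp [and_comm]

lemma ent_eq_sum (p : Ω → ℝ) (X : Ω → α) : ent p X = -∑ ω, p ω * logb 2 (pr p X (X ω)) := by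
  rw [ent, sum_pr_mul p X fun x => logb 2 (pr p X x)]

lemma pr_nonneg (hp : ∀ ω, 0 ≤ p ω) (X : Ω → α) (x : α) : 0 ≤ pr p X x :=
  sum_nonneg fun ω _ => hp ω

lemma self_le_pr (hp : ∀ ω, 0 ≤ p ω) (X : Ω → α) (ω : Ω) : p ω ≤ pr p X (X ω) :=
  single_le_sum (fun ω _ => hp ω) (by simp)

lemma pr_le_pr_of_factorsThrough (hp : ∀ ω, 0 ≤ p ω) {X : Ω → α} {Y : Ω → β}
    (h : Y.FactorsThrough X) (ω : Ω) : pr p X (X ω) ≤ pr p Y (Y ω) :=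
  sum_le_sum_of_subset_of_nonneg (fun ω' hω' => by simpa using h (mem_filter.1 hω').2)
    fun ω _ _ => hp ω

lemma ent_le_of_factorsThrough (hp : ∀ ω, 0 ≤ p ω) {X : Ω → α} {Y : Ω → β}
    (h : Y.FactorsThrough X) : ent p Y ≤ ent p X := by
  rw [ent_eq_sum, ent_eq_sum, neg_le_neg_iff]
  refine sum_le_sum fun ω _ => ?_
  rcases (hp ω).eq_or_lt with h0 | h0
  · simp [← h0]
  · exact mul_le_mul_of_nonneg_left (logb_le_logb_of_le one_lt_two
      (h0.trans_le (self_le_pr hp X ω)) (pr_le_pr_of_factorsThrough hp h ω)) h0.le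

lemma ent_congr (hp : ∀ ω, 0 ≤ p ω) {X : Ω → α} {Y : Ω → β}
    (h : ∀ ω ω', X ω = X ω' ↔ Y ω = Y ω') : ent p X = ent p Y :=
  le_antisymm (ent_le_of_factorsThrough hp fun _ _ => (h _ _).2)
    (ent_le_of_factorsThrough hp fun _ _ => (h _ _).1)

lemma ent_const (hp1 : ∑ ω, p ω = 1) {X : Ω → α} (h : ∀ ω ω', X ω = X ω') : ent p X = 0 := by
  have hpr : ∀ ω, pr p X (X ω) = 1 := fun ω => by
    rw [pr, filter_true_of_mem fun ω' _ => h ω' ω, hp1]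
  simp [ent_eq_sum, hpr]

lemma ent_le_logb_card [Fintype α] (hp : ∀ ω, 0 ≤ p ω) (hp1 : ∑ ω, p ω = 1) (X : Ω → α) :
    ent p X ≤ logb 2 (Fintype.card α) := by
  set n : ℝ := (Fintype.card α : ℝ)
  set r : Ω → ℝ := fun ω => pr p X (X ω)
  have hr : ∀ ω, 0 < p ω → 0 < r ω := fun ω h => h.trans_le (self_le_pr hp X ω)
  have hn : ∀ ω, 0 < p ω → 0 < n := fun ω _ => by
    have : Nonempty α := ⟨X ω⟩
    exact Nat.cast_pos.2 Fintype.card_pos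
  have hsum : ∑ ω, p ω * (1 / (n * r ω)) ≤ ∑ ω, p ω := calc
    ∑ ω, p ω * (1 / (n * r ω)) = ∑ x ∈ univ.image X, pr p X x * (1 / (n * pr p X x)) :=
      (sum_pr_mul p X fun x => 1 / (n * pr p X x)).symm
    _ ≤ ∑ x ∈ univ.image X, 1 / n := sum_le_sum fun x _ => by
      rcases (pr_nonneg hp X x).eq_or_lt with h | h
      · simp [← h, n]
      · rw [mul_one_div, div_mul_cancel_right₀ h.ne', one_div]
    _ ≤ 1 := by
      rw [sum_const, nsmul_eq_mul, mul_one_div]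
      exact div_le_one_of_le₀ (Nat.cast_le.2 (card_le_univ _)) (Nat.cast_nonneg _)
    _ = ∑ ω, p ω := hp1.symm
  have hent : ent p X - logb 2 n = ∑ ω, p ω * logb 2 (1 / (n * r ω)) := by
    have hlogn : logb 2 n = ∑ ω, p ω * logb 2 n := by rw [← sum_mul, hp1, one_mul]
    rw [ent_eq_sum, hlogn, ← sum_neg_distrib, ← sum_sub_distrib]
    refine sum_congr rfl fun ω _ => ?_
    rcases (hp ω).eq_or_lt with h | h
    · simp [← h]
    · rw [one_div, logb_inv, logb_mul (hn ω h).ne' (hr ω h).ne']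
      ring
  linarith [sum_mul_logb_nonpos hp (fun ω h => by have := hn ω h; have := hr ω h; positivity) hsum]

end Entropy

section MutualInformation

variable {Ω α β γ δ : Type*} [Fintype Ω] [DecidableEq α] [DecidableEq β] [DecidableEq γ]
  [DecidableEq δ] {p : Ω → ℝ}

lemma sum_pr_mul_pr_div_pr_le (hp : ∀ ω, 0 ≤ p ω) (X : Ω → α) (Y : Ω → β) (Z : Ω → γ) :
    ∑ t ∈ univ.image (fun ω => (X ω, Y ω, Z ω)),
        pr p (fun ω => (X ω, Z ω)) (t.1, t.2.2) * pr p (fun ω => (Y ω, Z ω)) t.2 / pr p Z t.2.2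
      ≤ ∑ ω, p ω := by
  have hsub : univ.image (fun ω => (X ω, Y ω, Z ω))
      ⊆ univ.image X ×ˢ univ.image (fun ω => (Y ω, Z ω)) := by
    intro t ht
    obtain ⟨ω, -, rfl⟩ := mem_image.1 ht
    exact mem_product.2 ⟨mem_image_of_mem _ (mem_univ ω), mem_image_of_mem _ (mem_univ ω)⟩
  refine (sum_le_sum_of_subset_of_nonneg hsub fun t _ _ => div_nonneg
    (mul_nonneg (pr_nonneg hp _ _) (pr_nonneg hp _ _)) (pr_nonneg hp _ _)).trans ?_
  rw [sum_product_right, ← sum_pr p fun ω => (Y ω, Z ω)]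
  refine sum_le_sum fun q _ => ?_
  dsimp only
  rw [← sum_div, ← sum_mul, sum_pr_prod_left, mul_div_right_comm]
  rcases (pr_nonneg hp Z q.2).eq_or_lt with h | h
  · simp [← h, pr_nonneg hp]
  · rw [div_self h.ne', one_mul]

lemma cmi_nonneg (hp : ∀ ω, 0 ≤ p ω) (X : Ω → α) (Y : Ω → β) (Z : Ω → γ) : 0 ≤ cmi p X Y Z := by
  set T : Ω → α × β × γ := fun ω => (X ω, Y ω, Z ω)
  -- `cmi p X Y Z` is `-E[log₂ q]` for this `q`, and `E[q] ≤ 1`.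
  set q : α × β × γ → ℝ := fun t => pr p (fun ω => (X ω, Z ω)) (t.1, t.2.2)
    * pr p (fun ω => (Y ω, Z ω)) t.2 / (pr p Z t.2.2 * pr p T t)
  have hpos : ∀ ω, 0 < p ω → 0 < pr p (fun ω => (X ω, Z ω)) (X ω, Z ω)
      ∧ 0 < pr p (fun ω => (Y ω, Z ω)) (Y ω, Z ω) ∧ 0 < pr p Z (Z ω) ∧ 0 < pr p T (T ω) :=
    fun ω h => ⟨h.trans_le (self_le_pr hp _ ω), h.trans_le (self_le_pr hp _ ω),
      h.trans_le (self_le_pr hp _ ω), h.trans_le (self_le_pr hp _ ω)⟩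
  have hcmi : cmi p X Y Z = -∑ ω, p ω * logb 2 (q (T ω)) := by
    have hterm : ∀ ω, p ω * logb 2 (q (T ω))
        = p ω * logb 2 (pr p (fun ω => (X ω, Z ω)) (X ω, Z ω))
          + p ω * logb 2 (pr p (fun ω => (Y ω, Z ω)) (Y ω, Z ω))
          - p ω * logb 2 (pr p Z (Z ω)) - p ω * logb 2 (pr p T (T ω)) := fun ω => by
      rcases (hp ω).eq_or_lt with h | h
      · simp [← h]
      · obtain ⟨ha, hb, hc, hr⟩ := hpos ω h
        simp only [q, T]
        rw [logb_div (by positivity) (by positivity), logb_mul ha.ne' hb.ne',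
          logb_mul hc.ne' hr.ne']
        ring
    simp only [cmi, ent_eq_sum, hterm, sum_sub_distrib, sum_add_distrib]
    ring
  have hsum : ∑ ω, p ω * q (T ω) ≤ ∑ ω, p ω := calc
    ∑ ω, p ω * q (T ω) = ∑ t ∈ univ.image T, pr p T t * q t := (sum_pr_mul p T q).symm
    _ ≤ ∑ t ∈ univ.image T, pr p (fun ω => (X ω, Z ω)) (t.1, t.2.2)
          * pr p (fun ω => (Y ω, Z ω)) t.2 / pr p Z t.2.2 := sum_le_sum fun t _ => by
      rcases (pr_nonneg hp T t).eq_or_lt with h | h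
      · simp only [← h, zero_mul]
        exact div_nonneg (mul_nonneg (pr_nonneg hp _ _) (pr_nonneg hp _ _)) (pr_nonneg hp _ _)
      · apply le_of_eq
        simp only [q]
        rw [mul_comm (pr p Z _), ← div_div, ← mul_div_assoc, mul_div_cancel₀ _ h.ne']
    _ ≤ ∑ ω, p ω := sum_pr_mul_pr_div_pr_le hp X Y Z
  rw [hcmi, neg_nonneg]
  exact sum_mul_logb_nonpos hp (fun ω h => by
    obtain ⟨ha, hb, hc, hr⟩ := hpos ω h
    simp only [q, T] at *
    positivity) hsum

noncomputable def condEnt (p : Ω → ℝ) (X : Ω → α) (Y : Ω → β) : ℝ :=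
  ent p (fun ω => (X ω, Y ω)) - ent p Y

lemma cmi_eq_condEnt_sub_condEnt (p : Ω → ℝ) (X : Ω → α) (Y : Ω → β) (Z : Ω → γ) :
    cmi p X Y Z = condEnt p X Z - condEnt p X (fun ω => (Y ω, Z ω)) := by
  unfold cmi condEnt
  ring

lemma condEnt_le_of_factorsThrough (hp : ∀ ω, 0 ≤ p ω) (X : Ω → α) {W : Ω → β} {Z : Ω → γ}
    (h : Z.FactorsThrough W) : condEnt p X W ≤ condEnt p X Z := by
  have hW : ent p (fun ω => (W ω, Z ω)) = ent p W :=
    ent_congr hp fun ω ω' => ⟨fun e => (Prod.ext_iff.1 e).1,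
      fun e => Prod.ext e (h e)⟩
  have hXW : ent p (fun ω => (X ω, W ω, Z ω)) = ent p (fun ω => (X ω, W ω)) :=
    ent_congr hp fun ω ω' => by
      simp only [Prod.mk.injEq]
      exact ⟨fun e => ⟨e.1, e.2.1⟩, fun e => ⟨e.1, e.2, h e.2⟩⟩
  have := cmi_nonneg hp X W Z
  unfold cmi at this
  unfold condEnt
  linarith

lemma cmi_le_of_factorsThrough (hp : ∀ ω, 0 ≤ p ω) (X : Ω → α) {Y : Ω → β} {Y' : Ω → δ}
    (Z : Ω → γ) (h : Y'.FactorsThrough Y) : cmi p X Y' Z ≤ cmi p X Y Z := by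
  rw [cmi_eq_condEnt_sub_condEnt, cmi_eq_condEnt_sub_condEnt, sub_le_sub_iff_left]
  refine condEnt_le_of_factorsThrough hp X fun ω ω' e => ?_
  simp only [Prod.mk.injEq] at e ⊢
  exact ⟨h e.1, e.2⟩

end MutualInformation

section Mask

variable {Ω ι : Type*} {β : ι → Type*} {X : (i : ι) → Ω → β i} {P Q : ι → Prop}
  [DecidablePred P] [DecidablePred Q]

/-- The subfamily `(X i)_{P i}` as one random variable, in the encoding the statement uses for
`V_1,…,V_k` and `W_{d_1},…,W_{d_{k-1}}`. -/
def mask (X : (i : ι) → Ω → β i) (P : ι → Prop) [DecidablePred P] (ω : Ω) :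
    (i : ι) → Option (β i) :=
  fun i => if P i then some (X i ω) else none

lemma mask_eq_mask_iff {ω ω' : Ω} : mask X P ω = mask X P ω' ↔ ∀ i, P i → X i ω = X i ω' := by
  simp only [mask, funext_iff]
  refine forall_congr' fun i => ?_
  by_cases hi : P i <;> simp [hi]

lemma mask_factorsThrough (h : ∀ i, Q i → P i) : (mask X Q).FactorsThrough (mask X P) :=
  fun _ _ e => mask_eq_mask_iff.2 fun i hi => mask_eq_mask_iff.1 e i (h i hi)

variable {γ : Type*} [Fintype Ω] [DecidableEq γ] [Fintype ι] [∀ i, DecidableEq (β i)]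
  {p : Ω → ℝ}

lemma ent_mask_of_forall_not (hp1 : ∑ ω, p ω = 1) (h : ∀ i, ¬ P i) : ent p (mask X P) = 0 :=
  ent_const hp1 fun _ _ => mask_eq_mask_iff.2 fun i hi => (h i hi).elim

lemma ent_prod_mask_of_forall_not (hp : ∀ ω, 0 ≤ p ω) (Y : Ω → γ) (h : ∀ i, ¬ P i) :
    ent p (fun ω => (Y ω, mask X P ω)) = ent p Y :=
  ent_congr hp fun _ _ => ⟨fun e => (Prod.ext_iff.1 e).1,
    fun e => Prod.ext e (mask_eq_mask_iff.2 fun i hi => (h i hi).elim)⟩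

lemma ent_prod_mask_congr (hp : ∀ ω, 0 ≤ p ω) (Y : Ω → γ) (h : ∀ i, P i ↔ Q i) :
    ent p (fun ω => (Y ω, mask X P ω)) = ent p (fun ω => (Y ω, mask X Q ω)) :=
  ent_congr hp fun _ _ => by simp only [Prod.mk.injEq, mask_eq_mask_iff, h]

lemma ent_mask_le [DecidableEq ι] [∀ i, Fintype (β i)] (hp : ∀ ω, 0 ≤ p ω)
    (hp1 : ∑ ω, p ω = 1) {c : ℝ} (hc : ∀ i, (Fintype.card (β i) : ℝ) ≤ 2 ^ c) :
    ent p (mask X P) ≤ #(univ.filter P) * c := by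
  obtain ⟨ω₀⟩ : Nonempty Ω :=
    univ_nonempty_iff.1 (nonempty_of_sum_ne_zero (by rw [hp1]; exact one_ne_zero))
  have hcard : (Fintype.card ((i : {i // P i}) → β i) : ℝ) ≤ ((2 : ℝ) ^ c) ^ #(univ.filter P) := by
    rw [Fintype.card_pi, Nat.cast_prod, ← Fintype.card_subtype, ← card_univ, ← prod_const]
    exact prod_le_prod (fun _ _ => Nat.cast_nonneg _) fun i _ => hc i
  calc ent p (mask X P) ≤ ent p (fun ω (i : {i // P i}) => X i ω) :=
        ent_le_of_factorsThrough hp fun _ _ e => mask_eq_mask_iff.2 fun i hi => congrFun e ⟨i, hi⟩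
    _ ≤ logb 2 (Fintype.card ((i : {i // P i}) → β i)) := ent_le_logb_card hp hp1 _
    _ ≤ logb 2 (((2 : ℝ) ^ c) ^ #(univ.filter P)) :=
        logb_le_logb_of_le one_lt_two (Nat.cast_pos.2 (@Fintype.card_pos _ _ ⟨fun i => X i ω₀⟩))
          hcard
    _ = #(univ.filter P) * c := by rw [logb_pow, logb_rpow two_pos (by norm_num)]

lemma condEnt_mask_of_iff (hp : ∀ ω, 0 ≤ p ω) {i : ι} (h : ∀ j, Q j ↔ P j ∨ j = i) :
    condEnt p (X i) (mask X P) = ent p (mask X Q) - ent p (mask X P) := by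
  have : ent p (fun ω => (X i ω, mask X P ω)) = ent p (mask X Q) := ent_congr hp fun ω ω' => by
    simp only [Prod.mk.injEq, mask_eq_mask_iff, h, or_imp, forall_and, forall_eq]
    tauto
  rw [condEnt, this]

lemma condEnt_prod_mask_of_iff (hp : ∀ ω, 0 ≤ p ω) (Y : Ω → γ) {i : ι}
    (h : ∀ j, Q j ↔ P j ∨ j = i) :
    condEnt p (X i) (fun ω => (Y ω, mask X P ω))
      = ent p (fun ω => (Y ω, mask X Q ω)) - ent p (fun ω => (Y ω, mask X P ω)) := by
  have : ent p (fun ω => (X i ω, Y ω, mask X P ω)) = ent p (fun ω => (Y ω, mask X Q ω)) :=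
    ent_congr hp fun ω ω' => by
      simp only [Prod.mk.injEq, mask_eq_mask_iff, h, or_imp, forall_and, forall_eq]
      tauto
  rw [condEnt, this]

end Mask

lemma ent_mask_lt_le {Ω : Type*} [Fintype Ω] {p : Ω → ℝ} {K ℓ : ℕ} {β : Fin K → Type*}
    [∀ i, Fintype (β i)] [∀ i, DecidableEq (β i)] (hp : ∀ ω, 0 ≤ p ω) (hp1 : ∑ ω, p ω = 1)
    (X : (i : Fin K) → Ω → β i) {c : ℝ} (hc : ∀ i, (Fintype.card (β i) : ℝ) ≤ 2 ^ c)
    (hℓ : ℓ ≤ K) : ent p (mask X fun i => (i : ℕ) < ℓ) ≤ ℓ * c := by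
  simpa [Fin.card_filter_val_lt, min_eq_right hℓ] using
    ent_mask_le hp hp1 (X := X) (P := fun i : Fin K => (i : ℕ) < ℓ) hc

lemma Fin.sum_telescope {M : Type*} [AddCommGroup M] (f : ℕ → M) (n : ℕ) :
    ∑ k : Fin n, (f (k + 1) - f k) = f n - f 0 := by
  rw [Fin.sum_univ_eq_sum_range (fun m => f (m + 1) - f m), sum_range_sub]

section Chain

variable {Ω γ : Type*} [Fintype Ω] [DecidableEq γ] {n : ℕ} {β : Fin n → Type*}
  [∀ i, DecidableEq (β i)] {p : Ω → ℝ}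

lemma sum_condEnt_mask_lt (hp : ∀ ω, 0 ≤ p ω) (hp1 : ∑ ω, p ω = 1) (X : (i : Fin n) → Ω → β i) :
    ∑ k : Fin n, condEnt p (X k) (mask X fun j => (j : ℕ) < k)
      = ent p (mask X fun j => (j : ℕ) < n) := by
  set f : ℕ → ℝ := fun m => ent p (mask X fun j => (j : ℕ) < m)
  have step : ∀ k : Fin n, condEnt p (X k) (mask X fun j => (j : ℕ) < k) = f (k + 1) - f k :=
    fun k => condEnt_mask_of_iff hp fun j => by rw [Nat.lt_succ_iff_lt_or_eq, Fin.val_inj]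
  rw [sum_congr rfl fun k _ => step k, Fin.sum_telescope]
  simp only [f, ent_mask_of_forall_not hp1 fun j => Nat.not_lt_zero _, sub_zero]

lemma sum_condEnt_prod_mask_lt (hp : ∀ ω, 0 ≤ p ω) (X : (i : Fin n) → Ω → β i) (Y : Ω → γ) :
    ∑ k : Fin n, condEnt p (X k) (fun ω => (Y ω, mask X (fun j => (j : ℕ) < k) ω))
      = ent p (fun ω => (Y ω, mask X (fun j => (j : ℕ) < n) ω)) - ent p Y := by
  set f : ℕ → ℝ := fun m => ent p (fun ω => (Y ω, mask X (fun j => (j : ℕ) < m) ω))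
  have step : ∀ k : Fin n,
      condEnt p (X k) (fun ω => (Y ω, mask X (fun j => (j : ℕ) < k) ω)) = f (k + 1) - f k :=
    fun k => condEnt_prod_mask_of_iff hp Y fun j => by rw [Nat.lt_succ_iff_lt_or_eq, Fin.val_inj]
  rw [sum_congr rfl fun k _ => step k, Fin.sum_telescope]
  simp only [f, ent_prod_mask_of_forall_not hp Y fun j => Nat.not_lt_zero _]

lemma sum_cmi_mask_lt (hp : ∀ ω, 0 ≤ p ω) (hp1 : ∑ ω, p ω = 1) (X : (i : Fin n) → Ω → β i)
    (Y : Ω → γ) :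
    ∑ k : Fin n, cmi p (X k) Y (mask X fun j => (j : ℕ) < k)
      = ent p (mask X fun j => (j : ℕ) < n) + ent p Y
        - ent p (fun ω => (Y ω, mask X (fun j => (j : ℕ) < n) ω)) := by
  simp only [cmi_eq_condEnt_sub_condEnt, sum_sub_distrib, sum_condEnt_mask_lt hp hp1,
    sum_condEnt_prod_mask_lt hp]
  ring

/-- Han-type inequality: conditioning `X_i` on all of `X_{<i}` rather than only on
`X_{S ∩ [0, i)}` can only lower its entropy. -/
lemma sum_condEnt_prod_mask_lt_le (hp : ∀ ω, 0 ≤ p ω) (X : (i : Fin n) → Ω → β i)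
    (Y : Ω → γ) (S : Finset (Fin n)) :
    ∑ i ∈ S, condEnt p (X i) (fun ω => (Y ω, mask X (fun j => (j : ℕ) < i) ω))
      ≤ ent p (fun ω => (Y ω, mask X (· ∈ S) ω)) - ent p Y := by
  set D : ℕ → ℝ := fun m => ent p (fun ω => (Y ω, mask X (fun j => j ∈ S ∧ (j : ℕ) < m) ω))
  have step : ∀ i : Fin n, (if i ∈ S then
      condEnt p (X i) (fun ω => (Y ω, mask X (fun j => (j : ℕ) < i) ω)) else 0)
      ≤ D (i + 1) - D i := by
    intro i
    split_ifs with hi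
    · rw [← condEnt_prod_mask_of_iff hp Y fun j => by
        rw [Nat.lt_succ_iff_lt_or_eq, Fin.val_inj]
        constructor
        · rintro ⟨hj, h | h⟩ <;> tauto
        · rintro (h | rfl) <;> tauto]
      refine condEnt_le_of_factorsThrough hp _ fun ω ω' e => ?_
      simp only [Prod.mk.injEq] at e ⊢
      exact ⟨e.1, mask_factorsThrough (fun j hj => hj.2) e.2⟩
    · refine sub_nonneg.2 (ent_prod_mask_congr hp Y fun j => ?_).ge
      rw [Nat.lt_succ_iff_lt_or_eq, Fin.val_inj]
      constructor
      · rintro ⟨hj, h | rfl⟩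
        exacts [⟨hj, h⟩, absurd hj hi]
      · exact fun h => ⟨h.1, Or.inl h.2⟩
  calc _ = ∑ i : Fin n, if i ∈ S then
          condEnt p (X i) (fun ω => (Y ω, mask X (fun j => (j : ℕ) < i) ω)) else 0 := by
        rw [sum_ite_mem, univ_inter]
    _ ≤ ∑ i : Fin n, (D (i + 1) - D i) := sum_le_sum fun i _ => step i
    _ = _ := by
      rw [Fin.sum_telescope]
      simp only [D]
      rw [ent_prod_mask_congr hp Y (Q := (· ∈ S)) fun j => and_iff_left j.isLt,
        ent_prod_mask_of_forall_not hp Y (P := fun j : Fin n => j ∈ S ∧ (j : ℕ) < 0)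
          fun j h => Nat.not_lt_zero _ h.2]

end Chain

section Injections

variable {α β : Type*} [Fintype α] [DecidableEq α] [Fintype β] [DecidableEq β]

lemma card_filter_injective_mem_image_eq (b b' : β) :
    #((univ.filter fun d : α → β => Injective d).filter fun d => b ∈ univ.image d)
      = #((univ.filter fun d : α → β => Injective d).filter fun d => b' ∈ univ.image d) := by
  refine card_nbij' (Equiv.swap b b' ∘ ·) (Equiv.swap b b' ∘ ·) ?_ ?_ ?_ ?_
  iterate 2
    intro d hd
    simp only [mem_coe, mem_filter, mem_univ, true_and, mem_image] at hd ⊢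
    obtain ⟨hinj, x, hx⟩ := hd
    exact ⟨(Equiv.injective _).comp hinj, x, by simp [hx]⟩
  all_goals exact fun d _ => funext fun x => Equiv.swap_apply_self _ _ _

lemma sum_filter_injective_sum_image (a : β → ℝ) :
    ∑ d ∈ univ.filter (fun d : α → β => Injective d), ∑ b ∈ univ.image d, a b
      = ∑ b, #((univ.filter fun d : α → β => Injective d).filter fun d => b ∈ univ.image d)
          * a b := by
  calc _ = ∑ d ∈ univ.filter (fun d : α → β => Injective d),
          ∑ b, if b ∈ univ.image d then a b else 0 :=
        sum_congr rfl fun d _ => by rw [sum_ite_mem, univ_inter]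
    _ = _ := sum_comm.trans (sum_congr rfl fun b _ => by rw [← sum_filter, sum_const, nsmul_eq_mul])

lemma card_mul_sum_filter_injective_sum_image (a : β → ℝ) :
    Fintype.card β * ∑ d ∈ univ.filter (fun d : α → β => Injective d), ∑ b ∈ univ.image d, a b
      = Fintype.card α * #(univ.filter fun d : α → β => Injective d) * ∑ b, a b := by
  set inj := univ.filter fun d : α → β => Injective d
  have htotal : ∑ b, (#(inj.filter fun d => b ∈ univ.image d) : ℝ) = Fintype.card α * #inj := by
    have := sum_filter_injective_sum_image (α := α) fun _ : β => (1 : ℝ)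
    simp only [mul_one, sum_const, nsmul_eq_mul] at this
    rw [← this, sum_congr rfl fun d hd => by
      rw [card_image_of_injective _ (mem_filter.1 hd).2, card_univ], sum_const, nsmul_eq_mul,
      mul_comm]
  have hcount : ∀ b, (Fintype.card β : ℝ) * #(inj.filter fun d => b ∈ univ.image d)
      = Fintype.card α * #inj := fun b => by
    rw [← htotal, sum_congr rfl fun b' _ => congrArg Nat.cast
      (card_filter_injective_mem_image_eq b' b), sum_const, card_univ, nsmul_eq_mul]
  rw [sum_filter_injective_sum_image, mul_sum, mul_sum]
  exact sum_congr rfl fun b _ => by rw [← mul_assoc, hcount]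

end Injections

lemma card_filter_injective_fin (ℓ N : ℕ) :
    #(univ.filter fun d : Fin ℓ → Fin N => Injective d) = ℓ.factorial * N.choose ℓ := by
  rw [← Fintype.card_subtype, Fintype.card_congr (Equiv.subtypeInjectiveEquivEmbedding _ _),
    Fintype.card_embedding_eq, Fintype.card_fin, Fintype.card_fin,
    Nat.descFactorial_eq_factorial_mul_choose]

lemma sum_cmi_mask_comp_le {Ω β γ : Type*} [Fintype Ω] [Fintype β] [DecidableEq β]
    [DecidableEq γ] {p : Ω → ℝ} (hp : ∀ ω, 0 ≤ p ω) (hp1 : ∑ ω, p ω = 1) {n ℓ : ℕ}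
    (X : Fin n → Ω → β) (Y : Ω → γ) (d : Fin ℓ → Fin n) {c : ℝ}
    (hc : (Fintype.card β : ℝ) ≤ 2 ^ c) :
    ∑ k : Fin ℓ, cmi p (X (d k)) Y (mask (fun j => X (d j)) fun j => (j : ℕ) < k)
      ≤ ℓ * c - ∑ i ∈ univ.image d,
          condEnt p (X i) (fun ω => (Y ω, mask X (fun j => (j : ℕ) < i) ω)) := by
  have hX := ent_mask_lt_le hp hp1 (fun j => X (d j)) (fun _ => hc) le_rfl
  have hXY : ent p (fun ω => (Y ω, mask (fun j => X (d j)) (fun j => (j : ℕ) < ℓ) ω))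
      = ent p (fun ω => (Y ω, mask X (· ∈ univ.image d) ω)) :=
    ent_congr hp fun ω ω' => by simp [mask_eq_mask_iff]
  rw [sum_cmi_mask_lt hp hp1 (fun j => X (d j)) Y, hXY]
  linarith [sum_condEnt_prod_mask_lt_le hp X Y (univ.image d)]

section Uniform

variable {Ω : Type*} [Fintype Ω] [Nonempty Ω]

lemma sum_one_div_card : ∑ _ω : Ω, 1 / (Fintype.card Ω : ℝ) = 1 := by
  rw [sum_const, card_univ, nsmul_eq_mul, mul_one_div_cancel
    (Nat.cast_ne_zero.2 Fintype.card_ne_zero)]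

lemma ent_uniform_id [DecidableEq Ω] :
    ent (fun _ : Ω => 1 / (Fintype.card Ω : ℝ)) id = logb 2 (Fintype.card Ω) := by
  have hpr : ∀ ω : Ω, pr (fun _ : Ω => 1 / (Fintype.card Ω : ℝ)) id (id ω)
      = 1 / (Fintype.card Ω : ℝ) := fun ω => by
    simp [pr, filter_eq']
  rw [ent_eq_sum, sum_congr rfl fun ω _ => by rw [hpr ω], sum_const, card_univ, nsmul_eq_mul,
    one_div, logb_inv]
  field_simp

lemma sum_condEnt_coord_uniform {γ : Type*} [DecidableEq γ] {N m : ℕ} [NeZero m]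
    (Y : (Fin N → Fin m) → γ) :
    ∑ i : Fin N, condEnt (fun _ : Fin N → Fin m => 1 / (Fintype.card (Fin N → Fin m) : ℝ))
        (fun ω => ω i) (fun ω => (Y ω, mask (fun (j : Fin N) ω => ω j) (fun j => (j : ℕ) < i) ω))
      = N * logb 2 m - ent (fun _ : Fin N → Fin m => 1 / (Fintype.card (Fin N → Fin m) : ℝ)) Y := by
  have hp : ∀ ω : Fin N → Fin m, 0 ≤ 1 / (Fintype.card (Fin N → Fin m) : ℝ) :=
    fun _ => by positivity
  have hWY : ent (fun _ : Fin N → Fin m => 1 / (Fintype.card (Fin N → Fin m) : ℝ))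
      (fun ω => (Y ω, mask (fun (j : Fin N) ω => ω j) (fun j => (j : ℕ) < N) ω))
      = ent (fun _ : Fin N → Fin m => 1 / (Fintype.card (Fin N → Fin m) : ℝ)) id :=
    ent_congr hp fun ω ω' => ⟨fun e => funext fun i => (mask_eq_mask_iff
      (X := fun (j : Fin N) (ω : Fin N → Fin m) => ω j)).1 (Prod.ext_iff.1 e).2 i i.isLt,
      fun e => by rw [show ω = ω' from e]⟩
  rw [sum_condEnt_prod_mask_lt hp (fun (j : Fin N) ω => ω j) Y, hWY, ent_uniform_id,
    Fintype.card_fun, Fintype.card_fin, Fintype.card_fin, Nat.cast_pow, logb_pow]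

end Uniform

theorem alpha_bound_ii_general
    (N K F : ℕ) (hN : 0 < N) (hF : 0 < F)
    (M : ℝ)
    (V : Fin K → Type) [∀ k, Fintype (V k)] [∀ k, DecidableEq (V k)]
    (hV : ∀ k, Fintype.card (V k) ≤ ⌊(2 : ℝ) ^ ((F : ℝ) * M)⌋₊)
    (g : ∀ k : Fin K, (Fin N → Fin (2 ^ F)) → V k)
    (ℓ : ℕ) (hℓ2 : ℓ ≤ min K N) :
    ∑ k : Fin ℓ, (1 / ((F : ℝ) * (N.choose ℓ : ℝ) * (ℓ.factorial : ℝ))) *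
        ∑ d ∈ Finset.univ.filter (fun d : Fin ℓ → Fin N => Function.Injective d),
          cmi (fun _ : Fin N → Fin (2 ^ F) =>
                (1 : ℝ) / (Fintype.card (Fin N → Fin (2 ^ F)) : ℝ))
            (fun ω => ω (d k))
            (fun ω => fun i : Fin K =>
              if (i : ℕ) ≤ (k : ℕ) then some (g i ω) else none)
            (fun ω => fun j : Fin ℓ =>
              if (j : ℕ) < (k : ℕ) then some (ω (d j)) else none)
      ≤ (ℓ : ℝ) ^ 2 * M / (N : ℝ) := by
  set p : (Fin N → Fin (2 ^ F)) → ℝ := fun _ => 1 / (Fintype.card (Fin N → Fin (2 ^ F)) : ℝ)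
  have hp : ∀ ω, 0 ≤ p ω := fun _ => by positivity
  have hp1 : ∑ ω, p ω = 1 := sum_one_div_card
  set W : Fin N → (Fin N → Fin (2 ^ F)) → Fin (2 ^ F) := fun i ω => ω i
  set Y := mask g fun i : Fin K => (i : ℕ) < ℓ
  set a : Fin N → ℝ := fun i =>
    condEnt p (W i) (fun ω => (Y ω, mask W (fun j => (j : ℕ) < i) ω))
  have hY : ent p Y ≤ ℓ * (F * M) := ent_mask_lt_le hp hp1 g
    (fun i => (Nat.cast_le.2 (hV i)).trans (Nat.floor_le (by positivity)))
    (hℓ2.trans (min_le_left _ _))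
  have ha : ∑ i, a i = N * F - ent p Y := (sum_condEnt_coord_uniform Y).trans (by
    rw [Nat.cast_pow, Nat.cast_ofNat, logb_pow, logb_self_eq_one one_lt_two, mul_one])
  have hd : ∀ d : Fin ℓ → Fin N, ∑ k : Fin ℓ, cmi p (W (d k))
      (mask g fun i : Fin K => (i : ℕ) ≤ k) (mask (fun j => W (d j)) fun j => (j : ℕ) < k)
      ≤ ℓ * F - ∑ i ∈ univ.image d, a i := fun d => by
    refine le_trans (sum_le_sum fun (k : Fin ℓ) _ => cmi_le_of_factorsThrough hp _ _
      (mask_factorsThrough fun i (hi : (i : ℕ) ≤ k) => hi.trans_lt k.isLt)) ?_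
    exact sum_cmi_mask_comp_le hp hp1 W Y d (c := F) (by simp [rpow_natCast])
  have havg := card_mul_sum_filter_injective_sum_image (α := Fin ℓ) a
  have hC : 0 < N.choose ℓ := Nat.choose_pos (hℓ2.trans (min_le_right _ _))
  simp only [Fintype.card_fin, card_filter_injective_fin, ha] at havg
  rw [← mul_sum, sum_comm]
  refine (mul_le_mul_of_nonneg_left (sum_le_sum fun d _ => hd d) (by positivity)).trans ?_
  rw [sum_sub_distrib, sum_const, nsmul_eq_mul, card_filter_injective_fin, div_mul_eq_mul_div,
    one_mul, div_le_div_iff₀ (by positivity) (by positivity)]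
  push_cast at havg ⊢
  linarith [mul_le_mul_of_nonneg_left hY (by positivity :
    (0 : ℝ) ≤ ℓ * (ℓ.factorial * N.choose ℓ))]

/-- **Lemma 3, part (ii).** With messages i.i.d. uniform (uniform distribution on
`Ω = Fin N → Fin (2^F)`) and caches `V_k = g_k(W_1,…,W_N)` of size at most
`⌊2^{F·M}⌋`, for every `ℓ ∈ {1,…,min(K,N)}`:
`∑_{k=1}^{ℓ} α_k ≤ ℓ²·M/N`, where `α_k` averages
`(1/F)·I(W_{d_k}; V_1,…,V_k | W_{d_1},…,W_{d_{k−1}})` over all ordered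
`ℓ`-tuples `d` with pairwise distinct entries (below `k : Fin ℓ` is 0-based). -/
theorem alpha_bound_ii
    (N K F : ℕ) (hN : 0 < N) (hK : 0 < K) (hF : 0 < F)
    (M : ℝ) (hM : 0 ≤ M)
    (V : Fin K → Type) [∀ k, Fintype (V k)] [∀ k, DecidableEq (V k)]
    (hV : ∀ k, Fintype.card (V k) ≤ ⌊(2 : ℝ) ^ ((F : ℝ) * M)⌋₊)
    (g : ∀ k : Fin K, (Fin N → Fin (2 ^ F)) → V k)
    (ℓ : ℕ) (hℓ1 : 1 ≤ ℓ) (hℓ2 : ℓ ≤ min K N) :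
    ∑ k : Fin ℓ, (1 / ((F : ℝ) * (N.choose ℓ : ℝ) * (ℓ.factorial : ℝ))) *
        ∑ d ∈ Finset.univ.filter (fun d : Fin ℓ → Fin N => Function.Injective d),
          cmi (fun _ : Fin N → Fin (2 ^ F) =>
                (1 : ℝ) / (Fintype.card (Fin N → Fin (2 ^ F)) : ℝ))
            (fun ω => ω (d k))
            (fun ω => fun i : Fin K =>
              if (i : ℕ) ≤ (k : ℕ) then some (g i ω) else none)
            (fun ω => fun j : Fin ℓ =>
              if (j : ℕ) < (k : ℕ) then some (ω (d j)) else none)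
      ≤ (ℓ : ℝ) ^ 2 * M / (N : ℝ) :=
  alpha_bound_ii_general N K F hN hF M V hV g ℓ hℓ2
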